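/- Fix r > 0. The map φ₊(z) := ((z₁/ρ₊, z₂/ρ₊), (ρ₊·z₃, ρ₊·z₄)), where ρ₊ := √(|z₁|² + |z₂|²), is a homeomorphism from M_r onto S³ × ℂ², where S³ := {w ∈ ℂ² : |w₁|² + |w₂|² = 1}. Symmetrically, the map φ₋(z) := ((ρ₋·z₁, ρ₋·z₂), (z₃/ρ₋, z₄/ρ₋)), where ρ₋ := √(|z₃|² + |z₄|²), is a homeomorphism from M_{−r} onto ℂ² × S³. -/

import Mathlib

/-- `M_r = {z ∈ ℂ⁴ : |z₁|² + |z₂|² − |z₃|² − |z₄|² = r}`. -/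
def Mslice (r : ℝ) : Set (Fin 4 → ℂ) :=
  {z | ‖z 0‖ ^ 2 + ‖z 1‖ ^ 2 - ‖z 2‖ ^ 2 - ‖z 3‖ ^ 2 = r}

/-- `S³ = {w ∈ ℂ² : |w₁|² + |w₂|² = 1}`. -/
def S3c : Set (Fin 2 → ℂ) := {w | ‖w 0‖ ^ 2 + ‖w 1‖ ^ 2 = 1}

/-!
On `M_r` with `r > 0` the block `(z₁, z₂)` never vanishes, so `φ₊` can normalise it. Writing
`(u, v) = φ₊(z)`, the radius `s = ρ₊` satisfies `s⁴ = r s² + |v|²`, whose positive root is an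
explicit continuous function of `|v|`; hence `(u, v) ↦ (s u, v / s)` is a continuous inverse. This
works for any pair of real normed spaces in place of the two copies of `ℂ²`, and `M_{-r}` is the
same hyperboloid with the two blocks exchanged.
-/

noncomputable section

open Metric

-- the positive root `s` of `s ^ 4 = r * s ^ 2 + t ^ 2`
def hyperRadius (r t : ℝ) : ℝ := √((r + √(r ^ 2 + 4 * t ^ 2)) / 2)

lemma hyperRadius_pos {r : ℝ} (hr : 0 < r) (t : ℝ) : 0 < hyperRadius r t :=
  Real.sqrt_pos.2 (by positivity)

lemma hyperRadius_pow_four (r t : ℝ) :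
    hyperRadius r t ^ 4 = r * hyperRadius r t ^ 2 + t ^ 2 := by
  have hroot : |r| ≤ √(r ^ 2 + 4 * t ^ 2) :=
    Real.abs_le_sqrt (by nlinarith [sq_nonneg t])
  have hsq : hyperRadius r t ^ 2 = (r + √(r ^ 2 + 4 * t ^ 2)) / 2 :=
    Real.sq_sqrt (by linarith [neg_abs_le r])
  have hdisc : √(r ^ 2 + 4 * t ^ 2) ^ 2 = r ^ 2 + 4 * t ^ 2 := Real.sq_sqrt (by positivity)
  rw [show hyperRadius r t ^ 4 = (hyperRadius r t ^ 2) ^ 2 by ring, hsq]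
  linear_combination hdisc / 4

lemma eq_hyperRadius {r t s : ℝ} (hs : 0 < s) (h : s ^ 4 = r * s ^ 2 + t ^ 2) :
    s = hyperRadius r t := by
  have hs2 : 0 < s ^ 2 := by positivity
  have hle : r ≤ s ^ 2 := by nlinarith [sq_nonneg t]
  have hdisc : √(r ^ 2 + 4 * t ^ 2) = 2 * s ^ 2 - r := by
    rw [Real.sqrt_eq_iff_mul_self_eq_of_pos (by linarith)]
    linear_combination 4 * h
  rw [hyperRadius, hdisc, show (r + (2 * s ^ 2 - r)) / 2 = s ^ 2 by ring, Real.sqrt_sq hs.le]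

lemma continuous_hyperRadius (r : ℝ) : Continuous (hyperRadius r) := by
  unfold hyperRadius
  fun_prop

section Hyperboloid

variable (E F : Type*) [NormedAddCommGroup E] [NormedAddCommGroup F]

def hyperboloid (r : ℝ) : Set (E × F) := {p | ‖p.1‖ ^ 2 - ‖p.2‖ ^ 2 = r}

variable {E F}

lemma norm_fst_pos_of_mem_hyperboloid {r : ℝ} (hr : 0 < r) {p : E × F}
    (hp : p ∈ hyperboloid E F r) : 0 < ‖p.1‖ := by
  have hp : ‖p.1‖ ^ 2 - ‖p.2‖ ^ 2 = r := hp
  exact (norm_nonneg _).lt_of_ne' fun h => by nlinarith [sq_nonneg ‖p.2‖]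

def hyperboloidNegHomeomorph (r : ℝ) : hyperboloid E F (-r) ≃ₜ hyperboloid F E r :=
  (Homeomorph.prodComm E F).subtype fun p => by
    change _ = -r ↔ _ = r
    rw [← neg_eq_iff_eq_neg, neg_sub]
    rfl

variable [NormedSpace ℝ F]

lemma hyperRadius_norm_smul_of_mem_hyperboloid {r : ℝ} (hr : 0 < r) {p : E × F}
    (hp : p ∈ hyperboloid E F r) : hyperRadius r ‖‖p.1‖ • p.2‖ = ‖p.1‖ := by
  have hp' : ‖p.1‖ ^ 2 - ‖p.2‖ ^ 2 = r := hp
  refine (eq_hyperRadius (norm_fst_pos_of_mem_hyperboloid hr hp) ?_).symm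
  rw [norm_smul, norm_norm, ← hp']
  ring

variable [NormedSpace ℝ E]

lemma smul_mem_hyperboloid {r : ℝ} (hr : 0 < r) {u : E} (hu : ‖u‖ = 1) (v : F) :
    (hyperRadius r ‖v‖ • u, (hyperRadius r ‖v‖)⁻¹ • v) ∈ hyperboloid E F r := by
  have hs := hyperRadius_pos hr ‖v‖
  have hquartic := hyperRadius_pow_four r ‖v‖
  show ‖hyperRadius r ‖v‖ • u‖ ^ 2 - ‖(hyperRadius r ‖v‖)⁻¹ • v‖ ^ 2 = r
  rw [norm_smul, norm_smul, hu, norm_inv, Real.norm_of_nonneg hs.le]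
  field_simp
  linear_combination hquartic

def hyperboloidHomeomorph {r : ℝ} (hr : 0 < r) :
    hyperboloid E F r ≃ₜ sphere (0 : E) 1 × F where
  toFun p := (⟨‖p.1.1‖⁻¹ • p.1.1, by
      simpa using norm_smul_inv_norm (𝕜 := ℝ)
        (norm_pos_iff.1 (norm_fst_pos_of_mem_hyperboloid hr p.2))⟩,
    ‖p.1.1‖ • p.1.2)
  invFun q := ⟨(hyperRadius r ‖q.2‖ • (q.1 : E), (hyperRadius r ‖q.2‖)⁻¹ • q.2),
    smul_mem_hyperboloid hr (by simp) q.2⟩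
  left_inv p := by
    have hx := (norm_fst_pos_of_mem_hyperboloid hr p.2).ne'
    ext1
    simp only [hyperRadius_norm_smul_of_mem_hyperboloid hr p.2, smul_smul,
      mul_inv_cancel₀ hx, inv_mul_cancel₀ hx, one_smul]
  right_inv q := by
    have hs := hyperRadius_pos hr ‖q.2‖
    have hnorm : ‖hyperRadius r ‖q.2‖ • (q.1 : E)‖ = hyperRadius r ‖q.2‖ := by
      simp [norm_smul, hs.le]
    ext1
    · ext1
      simp only [hnorm, smul_smul, inv_mul_cancel₀ hs.ne', one_smul]
    · simp only [hnorm, smul_smul, mul_inv_cancel₀ hs.ne', one_smul]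
  continuous_toFun := by
    have hx : ∀ p : hyperboloid E F r, ‖p.1.1‖ ≠ 0 := fun p =>
      (norm_fst_pos_of_mem_hyperboloid hr p.2).ne'
    fun_prop (disch := exact hx _)
  continuous_invFun := by
    have hs : ∀ q : sphere (0 : E) 1 × F, hyperRadius r ‖q.2‖ ≠ 0 := fun q =>
      (hyperRadius_pos hr _).ne'
    have := continuous_hyperRadius r
    fun_prop (disch := exact hs _)

end Hyperboloid

lemma EuclideanSpace.norm_sq_eq_fin_two (x : EuclideanSpace ℂ (Fin 2)) :
    ‖x‖ ^ 2 = ‖x 0‖ ^ 2 + ‖x 1‖ ^ 2 := by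
  rw [EuclideanSpace.norm_sq_eq, Fin.sum_univ_two]

-- `Fin 2 → ℂ` carries the sup norm, so the blocks are read in `EuclideanSpace` to get `|w|²`.
def splitHomeomorph : (Fin 4 → ℂ) ≃ₜ EuclideanSpace ℂ (Fin 2) × EuclideanSpace ℂ (Fin 2) where
  toFun z := (!₂[z 0, z 1], !₂[z 2, z 3])
  invFun p := ![p.1 0, p.1 1, p.2 0, p.2 1]
  left_inv z := by ext i; fin_cases i <;> rfl
  right_inv p := by ext i <;> fin_cases i <;> rfl
  continuous_toFun := by fun_prop
  continuous_invFun := by fun_prop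

def msliceHomeomorph (r : ℝ) :
    Mslice r ≃ₜ hyperboloid (EuclideanSpace ℂ (Fin 2)) (EuclideanSpace ℂ (Fin 2)) r :=
  splitHomeomorph.subtype fun z => by
    simp [Mslice, hyperboloid, splitHomeomorph, EuclideanSpace.norm_sq_eq_fin_two, sub_sub]

def s3cHomeomorph : S3c ≃ₜ sphere (0 : EuclideanSpace ℂ (Fin 2)) 1 :=
  (PiLp.homeomorph 2 _).symm.subtype fun w => by
    simp [S3c, PiLp.homeomorph, EuclideanSpace.norm_eq, Fin.sum_univ_two]

def msliceHomeomorphS3cProd {r : ℝ} (hr : 0 < r) : Mslice r ≃ₜ S3c × (Fin 2 → ℂ) :=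
  (msliceHomeomorph r).trans ((hyperboloidHomeomorph hr).trans
    (s3cHomeomorph.symm.prodCongr (PiLp.homeomorph 2 _)))

def msliceNegHomeomorphProdS3c {r : ℝ} (hr : 0 < r) : Mslice (-r) ≃ₜ (Fin 2 → ℂ) × S3c :=
  (msliceHomeomorph (-r)).trans ((hyperboloidNegHomeomorph r).trans
    ((hyperboloidHomeomorph hr).trans ((Homeomorph.prodComm _ _).trans
      ((PiLp.homeomorph 2 _).prodCongr s3cHomeomorph.symm))))

end

theorem stmt12 (r : ℝ) (hr : 0 < r) :
    (∃ h : ↥(Mslice r) ≃ₜ (↥S3c × (Fin 2 → ℂ)),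
      ∀ z : ↥(Mslice r),
        ((h z).1 : Fin 2 → ℂ) =
          ![z.1 0 / (Real.sqrt (‖z.1 0‖ ^ 2 + ‖z.1 1‖ ^ 2) : ℂ),
            z.1 1 / (Real.sqrt (‖z.1 0‖ ^ 2 + ‖z.1 1‖ ^ 2) : ℂ)] ∧
        (h z).2 =
          ![(Real.sqrt (‖z.1 0‖ ^ 2 + ‖z.1 1‖ ^ 2) : ℂ) * z.1 2,
            (Real.sqrt (‖z.1 0‖ ^ 2 + ‖z.1 1‖ ^ 2) : ℂ) * z.1 3]) ∧
    (∃ h : ↥(Mslice (-r)) ≃ₜ ((Fin 2 → ℂ) × ↥S3c),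
      ∀ z : ↥(Mslice (-r)),
        (h z).1 =
          ![(Real.sqrt (‖z.1 2‖ ^ 2 + ‖z.1 3‖ ^ 2) : ℂ) * z.1 0,
            (Real.sqrt (‖z.1 2‖ ^ 2 + ‖z.1 3‖ ^ 2) : ℂ) * z.1 1] ∧
        ((h z).2 : Fin 2 → ℂ) =
          ![z.1 2 / (Real.sqrt (‖z.1 2‖ ^ 2 + ‖z.1 3‖ ^ 2) : ℂ),
            z.1 3 / (Real.sqrt (‖z.1 2‖ ^ 2 + ‖z.1 3‖ ^ 2) : ℂ)]) := by
  refine ⟨⟨msliceHomeomorphS3cProd hr, fun z => ?_⟩,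
    ⟨msliceNegHomeomorphProdS3c hr, fun z => ?_⟩⟩ <;>
    refine ⟨?_, ?_⟩ <;> ext i <;> fin_cases i <;>
    simp [msliceHomeomorphS3cProd, msliceNegHomeomorphProdS3c, msliceHomeomorph, splitHomeomorph,
      hyperboloidHomeomorph, hyperboloidNegHomeomorph, s3cHomeomorph, PiLp.homeomorph,
      EuclideanSpace.norm_eq, Fin.sum_univ_two, div_eq_inv_mul, Complex.real_smul]
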